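/- Let s, n, a, b be positive natural numbers and let p be a prime such that s(n − 1) = p^a − 1 and p^b divides n, where b = a or a = 2b. Then n = p^a or n = p^b. -/

import Mathlib

/-!
Since `s ≥ 1`, `n - 1 ≤ s (n - 1) = p^a - 1`, so `p^b ≤ n ≤ p^a`; this settles `b = a`.
For `a = 2b` put `q = p^b`. Then `s n = q^2 + (s - 1)` and `q ∣ n` give `q ∣ s - 1`, while
`s (q - 1) ≤ s (n - 1) = (q + 1)(q - 1)` gives `s ≤ q + 1`. Hence `s = 1`, forcing `n = q^2`,
or `s = q + 1`, forcing `n - 1 = q - 1`.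
-/

namespace Nat

variable {s n q : ℕ}

theorem eq_of_dvd_of_mul_sub_one_eq_sub_one (hs : 0 < s) (hn : 0 < n) (hdvd : q ∣ n)
    (h : s * (n - 1) = q - 1) : n = q := by
  have hq : 0 < q := Nat.pos_of_dvd_of_pos hdvd hn
  have hqn : q ≤ n := Nat.le_of_dvd hn hdvd
  have hle : n - 1 ≤ q - 1 := h ▸ Nat.le_mul_of_pos_left (n - 1) hs
  omega

theorem dvd_sub_one_of_dvd_of_mul_sub_one_eq_sq_sub_one (hs : 0 < s) (hn : 0 < n)
    (hdvd : q ∣ n) (h : s * (n - 1) = q ^ 2 - 1) : q ∣ s - 1 := by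
  have hsn : s * n = q ^ 2 + (s - 1) := by
    have hq2 : 1 ≤ q ^ 2 := Nat.one_le_pow _ _ (Nat.pos_of_dvd_of_pos hdvd hn)
    have hsub : s * n = s * (n - 1) + s := by
      rw [← Nat.mul_add_one, Nat.sub_add_cancel hn]
    omega
  exact (Nat.dvd_add_right (Dvd.intro_left _ (sq q).symm)).mp (hsn ▸ hdvd.mul_left s)

theorem le_add_one_of_mul_sub_one_eq_sq_sub_one (hq : 1 < q) (hqn : q ≤ n)
    (h : s * (n - 1) = q ^ 2 - 1) : s ≤ q + 1 := by
  refine Nat.le_of_mul_le_mul_right ?_ (Nat.sub_pos_of_lt hq)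
  calc s * (q - 1) ≤ s * (n - 1) := Nat.mul_le_mul_left s (Nat.sub_le_sub_right hqn 1)
    _ = (q + 1) * (q - 1) := by rw [h, ← Nat.sq_sub_sq, one_pow]

theorem eq_sq_or_eq_of_dvd_of_mul_sub_one_eq_sq_sub_one (hs : 0 < s) (hn : 0 < n)
    (hq : 1 < q) (hdvd : q ∣ n) (h : s * (n - 1) = q ^ 2 - 1) : n = q ^ 2 ∨ n = q := by
  have hqs : q ∣ s - 1 := dvd_sub_one_of_dvd_of_mul_sub_one_eq_sq_sub_one hs hn hdvd h
  have hsq : s ≤ q + 1 := le_add_one_of_mul_sub_one_eq_sq_sub_one hq (Nat.le_of_dvd hn hdvd) h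
  rcases Nat.eq_zero_or_pos (s - 1) with hs1 | hs1
  · obtain rfl : s = 1 := by omega
    have hq2 : 1 ≤ q ^ 2 := Nat.one_le_pow _ _ (by omega)
    omega
  · obtain rfl : s = q + 1 := by
      have hs1q := Nat.eq_of_dvd_of_lt_two_mul hs1.ne' hqs (by omega)
      omega
    rw [← one_pow 2, Nat.sq_sub_sq] at h
    have hn1 := Nat.eq_of_mul_eq_mul_left (by omega) h
    omega

end Nat

theorem eq_pow_of_arith_general (s n a b : ℕ) (hs : 0 < s) (hn : 0 < n)
    (hb : 0 < b) (p : ℕ) (hp : p.Prime)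
    (h1 : s * (n - 1) = p ^ a - 1) (h2 : p ^ b ∣ n) (h3 : b = a ∨ a = 2 * b) :
    n = p ^ a ∨ n = p ^ b := by
  rcases h3 with rfl | rfl
  · exact .inl (Nat.eq_of_dvd_of_mul_sub_one_eq_sub_one hs hn h2 h1)
  · rw [pow_mul'] at h1 ⊢
    exact Nat.eq_sq_or_eq_of_dvd_of_mul_sub_one_eq_sq_sub_one hs hn
      (Nat.one_lt_pow hb.ne' hp.one_lt) h2 h1

/-- If `s(n-1) = p^a - 1` and `p^b ∣ n` where `b = a` or `a = 2b`
(all variables positive, `p` prime), then `n = p^a` or `n = p^b`. -/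
theorem eq_pow_of_arith (s n a b : ℕ) (hs : 0 < s) (hn : 0 < n) (ha : 0 < a)
    (hb : 0 < b) (p : ℕ) (hp : p.Prime)
    (h1 : s * (n - 1) = p ^ a - 1) (h2 : p ^ b ∣ n) (h3 : b = a ∨ a = 2 * b) :
    n = p ^ a ∨ n = p ^ b :=
  eq_pow_of_arith_general s n a b hs hn hb p hp h1 h2 h3
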